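/- arXiv:1601.03322 — 3 statements merged into one kernel-verified Lean document; each statement's English description precedes it below -/
import Mathlib

section
/- Let q be a prime power, n ≥ 1, and let S be a presemifield multiplication on F_{q^n} over F_q. Then mrk([S]), the minimum of rank M(S') over all F_q-bilinear multiplications S' isotopic to S, equals the minimum of rank M(H∘S) over all bijective F_q-linear maps H : F_{q^n} → F_{q^n} of the form H(x) = x + Σ_{j=1}^{n−1} h_j x^{q^j} (h_j ∈ F_{q^n}), where (H∘S)(x,y) := H(S(x,y)). -/
/-- `M` is the matrix of the multiplication `S`, i.e. `S x y = ∑_{i,j} M i j * x^{q^i} * y^{q^j}`. -/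
def IsMatrixOf (q n : ℕ) (K : Type) [Field K]
    (S : K → K → K) (M : Matrix (Fin n) (Fin n) K) : Prop :=
  ∀ x y : K, S x y = ∑ i : Fin n, ∑ j : Fin n, M i j * x ^ q ^ (i : ℕ) * y ^ q ^ (j : ℕ)

/-- `S` and `S'` are isotopic over `F`: there are bijective `F`-linear maps `Fm, Gm, Hm`
with `S'(Fm x, Gm y) = Hm (S x y)` for all `x, y`. -/
def Isotopic (F K : Type) [Field F] [Field K] [Algebra F K]
    (S S' : K → K → K) : Prop :=
  ∃ Fm Gm Hm : K ≃ₗ[F] K, ∀ x y : K, S' (Fm x) (Gm y) = Hm (S x y)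

/-- The set of ranks of matrices of multiplications isotopic to `S`;
`mrk([S])` is its infimum. -/
def mrkSet (q n : ℕ) (F K : Type) [Field F] [Field K] [Algebra F K]
    (S : K → K → K) : Set ℕ :=
  {r | ∃ (S' : K →ₗ[F] K →ₗ[F] K) (M' : Matrix (Fin n) (Fin n) K),
    Isotopic F K S (fun x y => S' x y) ∧
    IsMatrixOf q n K (fun x y => S' x y) M' ∧ M'.rank = r}

/-!
Every `F`-linear map of `K = F_{q^n}` is a `q`-polynomial `∑ a_j x^{q^j}` (the powers of
Frobenius form a `K`-basis of `End_F K`), and raising such a polynomial to the power `q^i` gives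
the `i`-th row of its Dickson matrix. Hence an isotopy `S'(F x, G y) = H(S x y)` yields
`M(H ∘ S) = D_Fᵀ M(S') D_G`, of rank at most `rank M(S')`. If `h_{j₀} ≠ 0` is a coefficient of
`H`, then `H' = c H^{q^m}` with `m = -j₀ (mod n)` and `c = h_{j₀}^{-q^m}` is normalized, and
`M(H' ∘ S)` arises from `M(H ∘ S)` by applying a field automorphism entrywise, shifting rows and
columns cyclically by `m` and scaling by `c`; none of these raises the rank.
-/

open Module FiniteField Matrix

theorem Matrix.rank_map_le {m R S : Type*} [Fintype m] [DecidableEq m] [Field R] [Field S]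
    (f : R →+* S) (A : Matrix m m R) : (A.map f).rank ≤ A.rank := by
  obtain ⟨V, U, e, hV, hU, hVAU⟩ := A.exists_rank_normal_form
  generalize A.rank = r at e hVAU ⊢
  -- the normal form exhibits `A` as a product through `Fin r`, and `A.map f` inherits it
  set P : Matrix m (Fin r) R := (fromRows 1 0).submatrix e id
  set Q : Matrix (Fin r) m R := (fromCols 1 0).submatrix id e
  have hPQ : P * Q = V * A * U := by
    rw [hVAU, ← submatrix_mul _ _ _ _ _ Function.bijective_id, fromRows_mul_fromCols]
    simp
  have hA : A = (V⁻¹ * P) * (Q * U⁻¹) := by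
    rw [Matrix.mul_assoc, ← Matrix.mul_assoc P, hPQ,
      mul_nonsing_inv_cancel_right _ _ ((isUnit_iff_isUnit_det U).1 hU),
      nonsing_inv_mul_cancel_left _ _ ((isUnit_iff_isUnit_det V).1 hV)]
  calc (A.map f).rank ≤ Fintype.card (Fin r) := by
        rw [hA, Matrix.map_mul]
        exact (rank_mul_le_left _ _).trans (rank_le_card_width _)
    _ = r := Fintype.card_fin _

theorem isMatrixOf_iff_dotProduct {q n : ℕ} {K : Type} [Field K] {T : K → K → K}
    {M : Matrix (Fin n) (Fin n) K} :
    IsMatrixOf q n K T M ↔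
      ∀ x y, T x y = (fun i : Fin n ↦ x ^ q ^ (i : ℕ)) ⬝ᵥ M *ᵥ fun j ↦ y ^ q ^ (j : ℕ) := by
  refine forall₂_congr fun x y ↦ ?_
  simp only [dotProduct, mulVec, Finset.mul_sum]
  exact Iff.of_eq <| congrArg _ <|
    Fintype.sum_congr _ _ fun i ↦ Fintype.sum_congr _ _ fun j ↦ by ring

theorem frobeniusAlgHom_pow_apply {F R : Type*} [Field F] [Fintype F] [CommRing R] [Algebra F R]
    (t : ℕ) (x : R) : (frobeniusAlgHom F R ^ t) x = x ^ Fintype.card F ^ t := by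
  rw [AlgHom.coe_pow, coe_frobeniusAlgHom, pow_iterate]

theorem frobeniusAlgEquivOfAlgebraic_pow_apply {F L : Type*} [Field F] [Fintype F] [Field L]
    [Algebra F L] [Algebra.IsAlgebraic F L] (t : ℕ) (x : L) :
    (frobeniusAlgEquivOfAlgebraic F L ^ t) x = x ^ Fintype.card F ^ t := by
  rw [AlgEquiv.coe_pow, coe_frobeniusAlgEquivOfAlgebraic_iterate]

section FiniteExtension

variable {F K : Type} [Field F] [Fintype F] [Field K] [Fintype K] [Algebra F K]

local notation "q" => Fintype.card F
local notation "n" => finrank F K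

instance : NeZero n := NeZero.of_pos finrank_pos

theorem pow_card_pow_mod_finrank (x : K) (t : ℕ) : x ^ q ^ (t % n) = x ^ q ^ t := by
  rw [← frobeniusAlgHom_pow_apply, ← frobeniusAlgHom_pow_apply, ← orderOf_frobeniusAlgHom,
    pow_mod_orderOf]

theorem pow_card_pow_pow_card_pow (x : K) (i j : Fin n) :
    (x ^ q ^ (j : ℕ)) ^ q ^ (i : ℕ) = x ^ q ^ ((j + i : Fin n) : ℕ) := by
  rw [Fin.val_add, pow_card_pow_mod_finrank, ← pow_mul, ← pow_add]

theorem LinearMap.exists_eq_sum_mul_pow_card_pow (L : K →ₗ[F] K) :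
    ∃ a : Fin n → K, ∀ x, L x = ∑ j, a j * x ^ q ^ (j : ℕ) := by
  have hli : LinearIndependent K fun j : Fin n ↦ (frobeniusAlgHom F K ^ (j : ℕ)).toLinearMap :=
    (linearIndependent_toLinearMap F K K).comp _ (bijective_frobeniusAlgHom_pow F K).1
  let b := basisOfLinearIndependentOfCardEqFinrank hli
    (by rw [Fintype.card_fin, finrank_linearMap_self])
  refine ⟨b.repr L, fun x ↦ ?_⟩
  conv_lhs => rw [← b.sum_repr L]
  simp only [LinearMap.coe_sum, Finset.sum_apply, LinearMap.smul_apply, b,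
    coe_basisOfLinearIndependentOfCardEqFinrank, AlgHom.toLinearMap_apply,
    frobeniusAlgHom_pow_apply, smul_eq_mul]

/-- The Dickson matrix of the `q`-polynomial `∑ a_j x^{q^j}`; the index `j - i` lives in `Fin n`,
so it is taken modulo `n`. -/
noncomputable def dicksonMatrix (a : Fin n → K) : Matrix (Fin n) (Fin n) K :=
  Matrix.of fun i j ↦ a (j - i) ^ q ^ (i : ℕ)

theorem sum_mul_pow_card_pow_pow (a : Fin n → K) (i : Fin n) (x : K) :
    (∑ j, a j * x ^ q ^ (j : ℕ)) ^ q ^ (i : ℕ) = ∑ j, dicksonMatrix a i j * x ^ q ^ (j : ℕ) := by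
  rw [← frobeniusAlgHom_pow_apply, map_sum]
  simp only [map_mul, frobeniusAlgHom_pow_apply, pow_card_pow_pow_card_pow]
  exact Fintype.sum_equiv (Equiv.addRight i) _ _ fun j ↦ by simp [dicksonMatrix]

theorem IsMatrixOf.comp_linearized {T : K → K → K} {M : Matrix (Fin n) (Fin n) K}
    (hT : IsMatrixOf q n K T M) {f g : K → K} {a b : Fin n → K}
    (hf : ∀ x, f x = ∑ j, a j * x ^ q ^ (j : ℕ)) (hg : ∀ y, g y = ∑ j, b j * y ^ q ^ (j : ℕ)) :
    IsMatrixOf q n K (fun x y ↦ T (f x) (g y)) ((dicksonMatrix a)ᵀ * M * dicksonMatrix b) := by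
  have hvec (c : Fin n → K) (x : K) : (fun i : Fin n ↦ (∑ j, c j * x ^ q ^ (j : ℕ)) ^ q ^ (i : ℕ)) =
      dicksonMatrix c *ᵥ fun j ↦ x ^ q ^ (j : ℕ) :=
    funext fun i ↦ sum_mul_pow_card_pow_pow c i x
  rw [isMatrixOf_iff_dotProduct] at hT ⊢
  intro x y
  rw [hT, hf, hg, hvec, hvec, mulVec_mulVec, Matrix.mul_assoc,
    ← mulVec_mulVec _ (dicksonMatrix a)ᵀ, dotProduct_mulVec _ (dicksonMatrix a)ᵀ, vecMul_transpose]

theorem IsMatrixOf.mul_pow_card_pow {T : K → K → K} {M : Matrix (Fin n) (Fin n) K}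
    (hT : IsMatrixOf q n K T M) (c : K) (m : Fin n) :
    IsMatrixOf q n K (fun x y ↦ c * T x y ^ q ^ (m : ℕ))
      ((c • M.map (frobeniusAlgHom F K ^ (m : ℕ))).submatrix (Equiv.subRight m)
        (Equiv.subRight m)) := by
  intro x y
  change c * T x y ^ _ = _
  rw [hT, ← frobeniusAlgHom_pow_apply, map_sum]
  simp only [map_sum, map_mul, frobeniusAlgHom_pow_apply, pow_card_pow_pow_card_pow,
    Finset.mul_sum]
  exact Fintype.sum_equiv (Equiv.addRight m) _ _ fun i ↦
    Fintype.sum_equiv (Equiv.addRight m) _ _ fun j ↦ by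
      simp only [submatrix_apply, Matrix.smul_apply, map_apply, Equiv.subRight_apply,
        Equiv.coe_addRight, add_sub_cancel_right, frobeniusAlgHom_pow_apply, smul_eq_mul]
      ring

theorem exists_isMatrixOf_le_of_isotopy {S S' : K → K → K} {M' : Matrix (Fin n) (Fin n) K}
    (hM' : IsMatrixOf q n K S' M') (Fm Gm Hm : K ≃ₗ[F] K)
    (hiso : ∀ x y, S' (Fm x) (Gm y) = Hm (S x y)) :
    ∃ N, IsMatrixOf q n K (fun x y ↦ Hm (S x y)) N ∧ N.rank ≤ M'.rank := by
  obtain ⟨a, ha⟩ := (Fm : K →ₗ[F] K).exists_eq_sum_mul_pow_card_pow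
  obtain ⟨b, hb⟩ := (Gm : K →ₗ[F] K).exists_eq_sum_mul_pow_card_pow
  refine ⟨(dicksonMatrix a)ᵀ * M' * dicksonMatrix b, fun x y ↦ ?_,
    (rank_mul_le_left _ _).trans (rank_mul_le_right _ _)⟩
  exact (hiso x y).symm.trans (hM'.comp_linearized ha hb x y)

theorem exists_normalized_of_isMatrixOf {T : K → K → K} (H : K ≃ₗ[F] K)
    {N : Matrix (Fin n) (Fin n) K} (hN : IsMatrixOf q n K (fun x y ↦ H (T x y)) N) :
    ∃ (H' : K ≃ₗ[F] K) (h : Fin n → K) (N' : Matrix (Fin n) (Fin n) K),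
      h 0 = 1 ∧ (∀ x, H' x = ∑ j, h j * x ^ q ^ (j : ℕ)) ∧
      IsMatrixOf q n K (fun x y ↦ H' (T x y)) N' ∧ N'.rank ≤ N.rank := by
  obtain ⟨a, ha⟩ := (H : K →ₗ[F] K).exists_eq_sum_mul_pow_card_pow
  simp only [LinearEquiv.coe_coe] at ha
  obtain ⟨j₀, hj₀⟩ : ∃ j, a j ≠ 0 := by
    by_contra! h
    exact one_ne_zero (H.injective (by simpa [h] using ha 1))
  set m := -j₀
  set c := (a j₀ ^ q ^ (m : ℕ))⁻¹
  have hc : c ≠ 0 := inv_ne_zero (pow_ne_zero _ hj₀)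
  let H' : K ≃ₗ[F] K := (H.trans (frobeniusAlgEquivOfAlgebraic F K ^ (m : ℕ)).toLinearEquiv).trans
    ((Units.mk0 c hc).mulLeftLinearEquiv F K)
  have hH' (z : K) : H' z = c * H z ^ q ^ (m : ℕ) := by
    simp [H', frobeniusAlgEquivOfAlgebraic_pow_apply]
  refine ⟨H', fun j ↦ c * dicksonMatrix a m j,
    (c • N.map (frobeniusAlgHom F K ^ (m : ℕ))).submatrix (Equiv.subRight m) (Equiv.subRight m),
    ?_, fun x ↦ ?_, fun x y ↦ ?_, ?_⟩
  · simp only [dicksonMatrix, of_apply, zero_sub, m, neg_neg]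
    exact inv_mul_cancel₀ (pow_ne_zero _ hj₀)
  · rw [hH', ha, sum_mul_pow_card_pow_pow, Finset.mul_sum]
    simp_rw [mul_assoc]
  · dsimp only
    rw [hH']
    exact hN.mul_pow_card_pow c m x y
  · rw [rank_submatrix, rank_smul_of_mem_nonZeroDivisors _ (mem_nonZeroDivisors_of_ne_zero hc)]
    exact rank_map_le _ N

end FiniteExtension

theorem stmt5_general (q n : ℕ) (hn : 1 ≤ n)
    (F K : Type) [Field F] [Field K] [Algebra F K] [Fintype F] [Fintype K]
    (hcF : Fintype.card F = q) (hcK : Fintype.card K = q ^ n)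
    (S : K →ₗ[F] K →ₗ[F] K) :
    sInf (mrkSet q n F K (fun x y => S x y)) =
      sInf {r : ℕ | ∃ (H : K ≃ₗ[F] K) (h : Fin n → K) (M' : Matrix (Fin n) (Fin n) K),
        h ⟨0, hn⟩ = 1 ∧ (∀ x : K, H x = ∑ j : Fin n, h j * x ^ q ^ (j : ℕ)) ∧
        IsMatrixOf q n K (fun x y => H (S x y)) M' ∧ M'.rank = r} := by
  subst hcF
  obtain rfl : finrank F K = n :=
    Nat.pow_right_injective Fintype.one_lt_card (card_eq_pow_finrank.symm.trans hcK)
  refine csInf_eq_csInf_of_forall_exists_le ?_ ?_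
  · rintro r ⟨S', M', ⟨Fm, Gm, Hm, hiso⟩, hM', rfl⟩
    obtain ⟨N, hN, hNM'⟩ := exists_isMatrixOf_le_of_isotopy hM' Fm Gm Hm hiso
    obtain ⟨H, h, N', h0, hH, hN', hN'N⟩ := exists_normalized_of_isMatrixOf Hm hN
    exact ⟨N'.rank, ⟨H, h, N', h0, hH, hN', rfl⟩, hN'N.trans hNM'⟩
  · rintro r ⟨H, -, M', -, -, hM', rfl⟩
    exact ⟨M'.rank, ⟨S.compr₂ H, M', ⟨.refl F K, .refl F K, H, fun _ _ ↦ rfl⟩, hM', rfl⟩, le_rfl⟩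

/-- `mrk([S])` equals the minimum of `rank M(H ∘ S)` over all bijective
`F_q`-linear `H` of the form `H(x) = x + ∑_{j=1}^{n-1} h_j x^{q^j}`. -/
theorem stmt5 (q n : ℕ) (hq : IsPrimePow q) (hn : 1 ≤ n)
    (F K : Type) [Field F] [Field K] [Algebra F K] [Fintype F] [Fintype K]
    (hcF : Fintype.card F = q) (hcK : Fintype.card K = q ^ n)
    (S : K →ₗ[F] K →ₗ[F] K)
    (hpre : ∀ x y : K, S x y = 0 → x = 0 ∨ y = 0) :
    sInf (mrkSet q n F K (fun x y => S x y)) =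
      sInf {r : ℕ | ∃ (H : K ≃ₗ[F] K) (h : Fin n → K) (M' : Matrix (Fin n) (Fin n) K),
        h ⟨0, hn⟩ = 1 ∧ (∀ x : K, H x = ∑ j : Fin n, h j * x ^ q ^ (j : ℕ)) ∧
        IsMatrixOf q n K (fun x y => H (S x y)) M' ∧ M'.rank = r} :=
  stmt5_general q n hn F K hcF hcK S
end

section
/- Let q be a prime power, n ≥ 1, let 1 ≤ k, m ≤ n−1 with k ≠ m, and let c ∈ F_{q^n} be nonzero and such that c ≠ x^{q^k − 1} · y^{q^m − 1} for all nonzero x, y ∈ F_{q^n}. Then the generalized twisted field GTF_{c,k,m} with multiplication x∘y := x·y − c·x^{q^k}·y^{q^m} satisfies mrk([GTF_{c,k,m}]) = 2; that is, the minimum of rank M(S') over all F_q-bilinear multiplications S' isotopic to (x,y) ↦ x∘y equals 2. -/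
open Module Matrix Finset

section FrobeniusPowers

variable {F K : Type} [Field F] [Field K] [Algebra F K] [Fintype F]

lemma frobeniusAlgHom_pow_apply_s8 (t : ℕ) (x : K) :
    (FiniteField.frobeniusAlgHom F K ^ t) x = x ^ Fintype.card F ^ t := by
  rw [AlgHom.coe_pow, FiniteField.coe_frobeniusAlgHom, pow_iterate]

variable [Fintype K]

instance : NeZero (finrank F K) := ⟨finrank_pos.ne'⟩

lemma pow_card_pow_val_add (s t : Fin (finrank F K)) (x : K) :
    x ^ Fintype.card F ^ ((s + t : Fin _) : ℕ) =
      (x ^ Fintype.card F ^ (t : ℕ)) ^ Fintype.card F ^ (s : ℕ) := by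
  have hmod := pow_mod_orderOf (FiniteField.frobeniusAlgHom F K) (s + t)
  rw [FiniteField.orderOf_frobeniusAlgHom] at hmod
  rw [← frobeniusAlgHom_pow_apply_s8, ← frobeniusAlgHom_pow_apply_s8, ← frobeniusAlgHom_pow_apply_s8,
    ← AlgHom.mul_apply, ← pow_add, Fin.val_add, hmod]

variable (F K) in
/-- Dedekind's independence of characters makes the `n` powers of the Frobenius linearly
independent over `K`, hence a basis of the `n`-dimensional `K`-space `End_F(K)`. -/
noncomputable def frobeniusPowBasis : Basis (Fin (finrank F K)) K (K →ₗ[F] K) :=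
  basisOfLinearIndependentOfCardEqFinrank
    ((linearIndependent_algHom_toLinearMap F K K).comp _
      (FiniteField.bijective_frobeniusAlgHom_pow F K).1)
    (by rw [Fintype.card_fin, finrank_linearMap_self])

lemma frobeniusPowBasis_apply (t : Fin (finrank F K)) (x : K) :
    frobeniusPowBasis F K t x = x ^ Fintype.card F ^ (t : ℕ) := by
  rw [frobeniusPowBasis, coe_basisOfLinearIndependentOfCardEqFinrank]
  exact frobeniusAlgHom_pow_apply_s8 _ x

lemma sum_smul_frobeniusPowBasis_apply (w : Fin (finrank F K) → K) (x : K) :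
    (∑ t, w t • frobeniusPowBasis F K t) x = ∑ t, w t * x ^ Fintype.card F ^ (t : ℕ) := by
  simp only [LinearMap.sum_apply, LinearMap.smul_apply, frobeniusPowBasis_apply, smul_eq_mul]

lemma LinearMap.exists_eq_sum_mul_pow (L : K →ₗ[F] K) :
    ∃ h : Fin (finrank F K) → K, ∀ x, L x = ∑ t, h t * x ^ Fintype.card F ^ (t : ℕ) :=
  ⟨(frobeniusPowBasis F K).repr L, fun x => by
    rw [← sum_smul_frobeniusPowBasis_apply, Basis.sum_repr]⟩

lemma eq_zero_of_sum_mul_pow_eq_zero (d : Fin (finrank F K) → K)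
    (hd : ∀ x : K, ∑ t, d t * x ^ Fintype.card F ^ (t : ℕ) = 0) : d = 0 := by
  have hsum : ∑ t, d t • frobeniusPowBasis F K t = 0 :=
    LinearMap.ext fun x => by simpa [sum_smul_frobeniusPowBasis_apply] using hd x
  exact funext (Fintype.linearIndependent_iff.mp (frobeniusPowBasis F K).linearIndependent d hsum)

end FrobeniusPowers

section MatrixOf

variable {q n : ℕ} {K : Type} [Field K]

lemma IsMatrixOf.sub {S T : K → K → K} {M N : Matrix (Fin n) (Fin n) K}
    (hS : IsMatrixOf q n K S M) (hT : IsMatrixOf q n K T N) :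
    IsMatrixOf q n K (fun x y => S x y - T x y) (M - N) := fun x y => by
  simp [hS x y, hT x y, sub_mul, sum_sub_distrib]

lemma isMatrixOf_single (i j : Fin n) (a : K) :
    IsMatrixOf q n K (fun x y => a * x ^ q ^ (i : ℕ) * y ^ q ^ (j : ℕ)) (single i j a) :=
  fun x y => by simp [single_apply, ite_and]

lemma isMatrixOf_vecMulVec {P Q : K → K} {α β : Fin n → K}
    (hP : ∀ x, P x = ∑ i, α i * x ^ q ^ (i : ℕ)) (hQ : ∀ y, Q y = ∑ j, β j * y ^ q ^ (j : ℕ)) :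
    IsMatrixOf q n K (fun x y => P x * Q y) (vecMulVec α β) := fun x y => by
  simp only [hP, hQ, sum_mul_sum, vecMulVec_apply]
  exact sum_congr rfl fun i _ => sum_congr rfl fun j _ => by ring

lemma Matrix.exists_eq_vecMulVec_of_rank_le_one {m l : Type*} [Finite m] [Fintype l]
    (M : Matrix m l K) (h : M.rank ≤ 1) : ∃ u v, M = vecMulVec u v := by
  rw [rank_eq_finrank_span_cols] at h
  obtain ⟨v₀, hv₀⟩ := finrank_le_one_iff.mp h
  choose r hr using fun j => hv₀ ⟨M.col j, Submodule.subset_span ⟨j, rfl⟩⟩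
  refine ⟨v₀, r, ext fun i j => ?_⟩
  have hij := congrArg (fun w : Submodule.span K (Set.range M.col) => (w : m → K) i) (hr j)
  simp only [SetLike.val_smul, Pi.smul_apply, smul_eq_mul, col_apply] at hij
  rw [vecMulVec_apply, ← hij, mul_comm]

lemma Matrix.rank_single_sub_single_le_two (i i' j j' : Fin n) (a b : K) :
    (single i j a - single i' j' b).rank ≤ 2 := by
  refine (rank_le_card_of_support_subset _ {i, i'} fun r hr => ?_).trans card_le_two
  by_contra hr'
  simp only [coe_insert, coe_singleton, Set.mem_insert_iff, Set.mem_singleton_iff, not_or] at hr'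
  apply hr
  ext j
  simp [Ne.symm hr'.1, Ne.symm hr'.2]

/-- The matrix with `v t` at position `(t + κ, t + μ)` for every `t` (indices mod `n`). -/
def offsetDiagonal (κ μ : Fin n) (v : Fin n → K) : Matrix (Fin n) (Fin n) K :=
  of fun i j => if i - κ = j - μ then v (i - κ) else 0

lemma offsetDiagonal_sub_ne_vecMulVec [NeZero n] {κ μ : Fin n} (hκ : κ ≠ 0) (hμ : μ ≠ 0)
    (hκμ : κ ≠ μ) {c : K} (hc : c ≠ 0) {h : Fin n → K} (hh : h ≠ 0) (α β : Fin n → K) :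
    offsetDiagonal 0 0 h - offsetDiagonal κ μ (fun t => h t * c ^ q ^ (t : ℕ)) ≠
      vecMulVec α β := by
  intro hA
  obtain ⟨t, ht⟩ := Function.ne_iff.mp hh
  have diag := congrFun₂ hA t t
  have offset := congrFun₂ hA (t + κ) (t + μ)
  have corner := congrFun₂ hA (t + κ) t
  have htμ : t ≠ t - μ := fun h => hμ (by simpa using h.symm)
  simp only [offsetDiagonal, Matrix.sub_apply, of_apply, vecMulVec_apply, sub_zero, sub_self,
    zero_sub, sub_right_inj, add_right_inj, add_sub_cancel_right, add_eq_left, zero_eq_mul,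
    ↓reduceIte, hκ, hκμ, htμ] at diag offset corner
  have hβ : β t ≠ 0 := right_ne_zero_of_mul (diag ▸ ht)
  have hα : α (t + κ) ≠ 0 :=
    left_ne_zero_of_mul (offset ▸ neg_ne_zero.mpr (mul_ne_zero ht (pow_ne_zero _ hc)))
  exact corner.elim hα hβ

end MatrixOf

section TwistedField

variable {F K : Type} [Field F] [Field K] [Algebra F K] [Fintype F] [Fintype K]

lemma IsMatrixOf.unique {S : K → K → K} {M M' : Matrix (Fin (finrank F K)) (Fin (finrank F K)) K}
    (hM : IsMatrixOf (Fintype.card F) (finrank F K) K S M)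
    (hM' : IsMatrixOf (Fintype.card F) (finrank F K) K S M') : M = M' := by
  have hcol : ∀ x j, ∑ i, (M i j - M' i j) * x ^ Fintype.card F ^ (i : ℕ) = 0 := fun x =>
    congrFun (eq_zero_of_sum_mul_pow_eq_zero (F := F) _ fun y => by
      calc _ = ∑ i, ∑ j, (M i j - M' i j) * x ^ Fintype.card F ^ (i : ℕ) *
                y ^ Fintype.card F ^ (j : ℕ) := by
            simp only [sum_mul]; exact sum_comm
        _ = (∑ i, ∑ j, M i j * x ^ Fintype.card F ^ (i : ℕ) * y ^ Fintype.card F ^ (j : ℕ)) -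
            ∑ i, ∑ j, M' i j * x ^ Fintype.card F ^ (i : ℕ) * y ^ Fintype.card F ^ (j : ℕ) := by
            simp only [← sum_sub_distrib, sub_mul]
        _ = 0 := by rw [← hM, ← hM', sub_self])
  ext i j
  exact sub_eq_zero.mp (congrFun (eq_zero_of_sum_mul_pow_eq_zero (F := F) _ (hcol · j)) i)

lemma IsMatrixOf.exists_linearMap_mul_of_rank_le_one {S : K → K → K}
    {M : Matrix (Fin (finrank F K)) (Fin (finrank F K)) K}
    (hM : IsMatrixOf (Fintype.card F) (finrank F K) K S M) (hr : M.rank ≤ 1) :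
    ∃ U V : K →ₗ[F] K, ∀ x y, S x y = U x * V y := by
  obtain ⟨u, v, rfl⟩ := M.exists_eq_vecMulVec_of_rank_le_one hr
  refine ⟨∑ i, u i • frobeniusPowBasis F K i, ∑ j, v j • frobeniusPowBasis F K j, fun x y => ?_⟩
  rw [hM x y]
  exact (isMatrixOf_vecMulVec (sum_smul_frobeniusPowBasis_apply u)
    (sum_smul_frobeniusPowBasis_apply v) x y).symm

lemma Isotopic.exists_isMatrixOf_linearEquiv_comp {S S' : K → K → K}
    {M : Matrix (Fin (finrank F K)) (Fin (finrank F K)) K} (hS : Isotopic F K S S')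
    (hM : IsMatrixOf (Fintype.card F) (finrank F K) K S' M) (hr : M.rank ≤ 1) :
    ∃ (H : K ≃ₗ[F] K) (α β : Fin (finrank F K) → K),
      IsMatrixOf (Fintype.card F) (finrank F K) K (fun x y => H (S x y)) (vecMulVec α β) := by
  obtain ⟨Fm, Gm, H, hFGH⟩ := hS
  obtain ⟨U, V, hUV⟩ := hM.exists_linearMap_mul_of_rank_le_one hr
  obtain ⟨α, hα⟩ := (U ∘ₗ Fm.toLinearMap).exists_eq_sum_mul_pow
  obtain ⟨β, hβ⟩ := (V ∘ₗ Gm.toLinearMap).exists_eq_sum_mul_pow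
  refine ⟨H, α, β, fun x y => ?_⟩
  change H (S x y) = _
  rw [← hFGH, hUV]
  exact isMatrixOf_vecMulVec hα hβ x y

lemma isMatrixOf_offsetDiagonal (h : Fin (finrank F K) → K) (a : K) (κ μ : Fin (finrank F K)) :
    IsMatrixOf (Fintype.card F) (finrank F K) K
      (fun x y => ∑ t, h t * (a * x ^ Fintype.card F ^ (κ : ℕ) * y ^ Fintype.card F ^ (μ : ℕ)) ^
        Fintype.card F ^ (t : ℕ))
      (offsetDiagonal κ μ fun t => h t * a ^ Fintype.card F ^ (t : ℕ)) := fun x y => by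
  symm
  rw [← Equiv.sum_comp (Equiv.addRight κ)]
  refine (sum_congr rfl fun s _ => (Equiv.sum_comp (Equiv.addRight μ) _).symm).trans ?_
  simp [offsetDiagonal, pow_card_pow_val_add, mul_pow, mul_assoc]

variable (F) in
def twistedFieldMul (c : K) (κ μ : Fin (finrank F K)) (x y : K) : K :=
  x * y - c * x ^ Fintype.card F ^ (κ : ℕ) * y ^ Fintype.card F ^ (μ : ℕ)

lemma isMatrixOf_twistedFieldMul (c : K) (κ μ : Fin (finrank F K)) :
    IsMatrixOf (Fintype.card F) (finrank F K) K (twistedFieldMul F c κ μ)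
      (single 0 0 1 - single κ μ c) := by
  convert (isMatrixOf_single 0 0 (1 : K)).sub (isMatrixOf_single κ μ c) using 1
  ext x y
  simp [twistedFieldMul]

lemma exists_mem_mrkSet_twistedFieldMul_le_two (c : K) (κ μ : Fin (finrank F K)) :
    ∃ r ∈ mrkSet (Fintype.card F) (finrank F K) F K (twistedFieldMul F c κ μ), r ≤ 2 := by
  have hadd (t : ℕ) (x y : K) := map_add (FiniteField.frobeniusAlgHom F K ^ t) x y
  have hsmul (t : ℕ) (a : F) (x : K) := map_smul (FiniteField.frobeniusAlgHom F K ^ t) a x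
  simp only [frobeniusAlgHom_pow_apply_s8] at hadd hsmul
  let S : K →ₗ[F] K →ₗ[F] K := LinearMap.mk₂ F (twistedFieldMul F c κ μ)
    (fun x x' y => by simp only [twistedFieldMul, hadd]; ring)
    (fun a x y => by simp only [twistedFieldMul, hsmul, smul_mul_assoc, mul_smul_comm, smul_sub])
    (fun x y y' => by simp only [twistedFieldMul, hadd]; ring)
    (fun a x y => by simp only [twistedFieldMul, hsmul, mul_smul_comm, smul_sub])
  exact ⟨_, ⟨S, _, ⟨.refl F K, .refl F K, .refl F K, fun x y => rfl⟩,
    isMatrixOf_twistedFieldMul c κ μ, rfl⟩, rank_single_sub_single_le_two _ _ _ _ _ _⟩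

lemma exists_isMatrixOf_linearEquiv_comp_twistedFieldMul (H : K ≃ₗ[F] K) (c : K)
    (κ μ : Fin (finrank F K)) :
    ∃ h ≠ 0, IsMatrixOf (Fintype.card F) (finrank F K) K
      (fun x y => H (twistedFieldMul F c κ μ x y))
      (offsetDiagonal 0 0 h - offsetDiagonal κ μ fun t => h t * c ^ Fintype.card F ^ (t : ℕ)) := by
  obtain ⟨h, hh⟩ := H.toLinearMap.exists_eq_sum_mul_pow
  refine ⟨h, ?_, ?_⟩
  · rintro rfl
    exact one_ne_zero (H.map_eq_zero_iff.mp (by simpa using hh 1))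
  · convert (isMatrixOf_offsetDiagonal h 1 0 0).sub (isMatrixOf_offsetDiagonal h c κ μ) using 1
    · ext x y
      simp [twistedFieldMul, ← hh]
    · simp

lemma two_le_of_mem_mrkSet_twistedFieldMul {c : K} {κ μ : Fin (finrank F K)} (hκ : κ ≠ 0)
    (hμ : μ ≠ 0) (hκμ : κ ≠ μ) (hc : c ≠ 0) :
    ∀ r ∈ mrkSet (Fintype.card F) (finrank F K) F K (twistedFieldMul F c κ μ), 2 ≤ r := by
  rintro r ⟨S', M, hS, hM, rfl⟩
  by_contra! hr
  obtain ⟨H, α, β, hA⟩ := hS.exists_isMatrixOf_linearEquiv_comp hM (by omega)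
  obtain ⟨h, hh, hB⟩ := exists_isMatrixOf_linearEquiv_comp_twistedFieldMul H c κ μ
  exact offsetDiagonal_sub_ne_vecMulVec hκ hμ hκμ hc hh α β (hB.unique hA)

end TwistedField

theorem stmt8_general (q n : ℕ)
    (F K : Type) [Field F] [Field K] [Algebra F K] [Fintype F] [Fintype K]
    (hcF : Fintype.card F = q) (hcK : Fintype.card K = q ^ n)
    (k m : ℕ) (hk1 : 1 ≤ k) (hk2 : k ≤ n - 1) (hm1 : 1 ≤ m) (hm2 : m ≤ n - 1)
    (hkm : k ≠ m) (c : K) (hc0 : c ≠ 0) :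
    sInf (mrkSet q n F K (fun x y => x * y - c * x ^ q ^ k * y ^ q ^ m)) = 2 := by
  subst hcF
  obtain rfl : finrank F K = n :=
    Nat.pow_right_injective Fintype.one_lt_card (card_eq_pow_finrank.symm.trans hcK)
  let κ : Fin (finrank F K) := ⟨k, by omega⟩
  let μ : Fin (finrank F K) := ⟨m, by omega⟩
  have hκ : κ ≠ 0 := by simp only [κ, ne_eq, Fin.ext_iff, Fin.val_zero]; omega
  have hμ : μ ≠ 0 := by simp only [μ, ne_eq, Fin.ext_iff, Fin.val_zero]; omega
  have hκμ : κ ≠ μ := by simpa [κ, μ, Fin.ext_iff]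
  obtain ⟨r, hr, hr2⟩ := exists_mem_mrkSet_twistedFieldMul_le_two c κ μ
  exact le_antisymm ((Nat.sInf_le hr).trans hr2)
    (le_csInf ⟨r, hr⟩ (two_le_of_mem_mrkSet_twistedFieldMul hκ hμ hκμ hc0))

/-- a generalized twisted field `GTF_{c,k,m}` has `mrk([GTF_{c,k,m}]) = 2`. -/
theorem stmt8 (q n : ℕ) (hq : IsPrimePow q) (hn : 1 ≤ n)
    (F K : Type) [Field F] [Field K] [Algebra F K] [Fintype F] [Fintype K]
    (hcF : Fintype.card F = q) (hcK : Fintype.card K = q ^ n)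
    (k m : ℕ) (hk1 : 1 ≤ k) (hk2 : k ≤ n - 1) (hm1 : 1 ≤ m) (hm2 : m ≤ n - 1)
    (hkm : k ≠ m) (c : K) (hc0 : c ≠ 0)
    (hc : ∀ x y : K, x ≠ 0 → y ≠ 0 → c ≠ x ^ (q ^ k - 1) * y ^ (q ^ m - 1)) :
    sInf (mrkSet q n F K (fun x y => x * y - c * x ^ q ^ k * y ^ q ^ m)) = 2 :=
  stmt8_general q n F K hcF hcK k m hk1 hk2 hm1 hm2 hkm c hc0
end

section
/- Let q be a prime power, n ≥ 1, and let S be a presemifield multiplication on F_{q^n} over F_q. Then its transpose S^t is again a presemifield multiplication and brk(S^t) = brk(S). -/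
/-- The set of `r` such that some multiplication isotopic to `S` over `F` has the form
`(x,y) ↦ ∑_{i=1}^r gᵢ(fᵢ(x)·y)` with `F`-linear `fᵢ, gᵢ`; the BEL-rank `brk(S)` is its
infimum. -/
def brkSet (F K : Type) [Field F] [Field K] [Algebra F K]
    (S : K → K → K) : Set ℕ :=
  {r | ∃ (S' : K → K → K) (f g : Fin r → (K →ₗ[F] K)),
    Isotopic F K S S' ∧ ∀ x y : K, S' x y = ∑ i : Fin r, g i (f i x * y)}

open Algebra

section TraceTranspose

variable {F K : Type} [Field F] [Field K] [Algebra F K]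
  [FiniteDimensional F K] [Algebra.IsSeparable F K]

variable (F) in
theorem eq_of_forall_trace_mul_eq {a b : K}
    (h : ∀ z : K, trace F K (z * a) = trace F K (z * b)) : a = b := by
  refine sub_eq_zero.mp <| (traceForm_nondegenerate F K).1 (a - b) fun z => ?_
  rw [traceForm_apply, mul_comm, mul_sub, map_sub, h, sub_self]

variable (F K) in
noncomputable def traceDual : K ≃ₗ[F] Module.Dual F K :=
  (traceForm F K).toDual (traceForm_nondegenerate F K)

noncomputable def traceAdjoint (g : K →ₗ[F] K) : K →ₗ[F] K :=
  (traceDual F K).symm.toLinearMap ∘ₗ g.dualMap ∘ₗ (traceDual F K).toLinearMap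

noncomputable def traceAdjointEquiv (e : K ≃ₗ[F] K) : K ≃ₗ[F] K :=
  (traceDual F K).trans (e.dualMap.trans (traceDual F K).symm)

theorem trace_mul_traceAdjoint (g : K →ₗ[F] K) (x y : K) :
    trace F K (x * traceAdjoint g y) = trace F K (g x * y) := by
  have h := congrArg (· x) ((traceDual F K).apply_symm_apply (g.dualMap (traceDual F K y)))
  change trace F K (traceAdjoint g y * x) = trace F K (y * g x) at h
  rw [mul_comm, h, mul_comm]

theorem trace_mul_traceAdjointEquiv (e : K ≃ₗ[F] K) (x y : K) :
    trace F K (x * traceAdjointEquiv e y) = trace F K (e x * y) :=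
  trace_mul_traceAdjoint (e : K →ₗ[F] K) x y

variable (F) in
def IsTraceTranspose (S T : K → K → K) : Prop :=
  ∀ x y z : K, trace F K (S z y * x) = trace F K (z * T x y)

omit [FiniteDimensional F K] [Algebra.IsSeparable F K] in
theorem IsTraceTranspose.symm {S T : K → K → K} (h : IsTraceTranspose F S T) :
    IsTraceTranspose F T S := fun x y z => by
  rw [mul_comm, ← h, mul_comm]

theorem isTraceTranspose_sum_mul {r : ℕ} (f g : Fin r → K →ₗ[F] K) :
    IsTraceTranspose F (fun x y => ∑ i, g i (f i x * y))
      (fun x y => ∑ i, traceAdjoint (f i) (traceAdjoint (g i) x * y)) := by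
  intro x y z
  simp only [Finset.sum_mul, Finset.mul_sum, map_sum]
  refine Finset.sum_congr rfl fun i _ => ?_
  rw [trace_mul_traceAdjoint, mul_left_comm, mul_comm (traceAdjoint (g i) x),
    trace_mul_traceAdjoint]

theorem IsTraceTranspose.isotopic {S S' T T' : K → K → K} (hS : IsTraceTranspose F S T)
    (hS' : IsTraceTranspose F S' T') (hiso : Isotopic F K S S') : Isotopic F K T T' := by
  obtain ⟨Fm, Gm, Hm, hFGH⟩ := hiso
  refine ⟨(traceAdjointEquiv Hm).symm, Gm, traceAdjointEquiv Fm.symm, fun x y =>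
    eq_of_forall_trace_mul_eq F fun z => ?_⟩
  have hz : S' z (Gm y) = Hm (S (Fm.symm z) y) := by
    simpa using hFGH (Fm.symm z) y
  rw [← hS', hz, ← trace_mul_traceAdjointEquiv, LinearEquiv.apply_symm_apply, hS,
    trace_mul_traceAdjointEquiv]

theorem IsTraceTranspose.brkSet_subset {S T : K → K → K} (h : IsTraceTranspose F S T) :
    brkSet F K S ⊆ brkSet F K T := by
  rintro r ⟨S', f, g, hiso, hS'⟩
  refine ⟨_, fun i => traceAdjoint (g i), fun i => traceAdjoint (f i),
    h.isotopic ?_ hiso, fun x y => rfl⟩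
  rw [show S' = fun x y => ∑ i, g i (f i x * y) from funext₂ hS']
  exact isTraceTranspose_sum_mul f g

theorem IsTraceTranspose.brkSet_eq {S T : K → K → K} (h : IsTraceTranspose F S T) :
    brkSet F K T = brkSet F K S :=
  h.symm.brkSet_subset.antisymm h.brkSet_subset

theorem IsTraceTranspose.eq_zero_or_eq_zero {S : K →ₗ[F] K →ₗ[F] K} {T : K → K → K}
    (h : IsTraceTranspose F (fun x y => S x y) T) (hS : ∀ x y, S x y = 0 → x = 0 ∨ y = 0)
    {x y : K} (hT : T x y = 0) : x = 0 ∨ y = 0 := by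
  refine or_iff_not_imp_right.mpr fun hy => eq_of_forall_trace_mul_eq F fun w => ?_
  have hinj : Function.Injective (S.flip y) :=
    (injective_iff_map_eq_zero _).mpr fun z hz => (hS z y hz).resolve_right hy
  obtain ⟨z, rfl⟩ := LinearMap.injective_iff_surjective.mp hinj w
  rw [mul_zero, map_zero, LinearMap.flip_apply, h, hT, mul_zero, map_zero]

end TraceTranspose

theorem stmt11_general
    (F K : Type) [Field F] [Field K] [Algebra F K] [Fintype K]
    (S : K →ₗ[F] K →ₗ[F] K)
    (hpre : ∀ x y : K, S x y = 0 → x = 0 ∨ y = 0)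
    (St : K →ₗ[F] K →ₗ[F] K)
    (hSt : ∀ x y z : K,
      Algebra.trace F K (S z y * x) = Algebra.trace F K (z * St x y)) :
    (∀ x y : K, St x y = 0 → x = 0 ∨ y = 0) ∧
    sInf (brkSet F K (fun x y => St x y)) = sInf (brkSet F K (fun x y => S x y)) := by
  -- `F` is then perfect, so `K/F` is separable
  have : Finite F := Finite.of_injective _ (algebraMap F K).injective
  have hT : IsTraceTranspose F (fun x y => S x y) (fun x y => St x y) := hSt
  exact ⟨fun _ _ => hT.eq_zero_or_eq_zero hpre, congrArg sInf hT.brkSet_eq⟩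

/-- the transpose `S^t` of a presemifield multiplication `S`, characterized
by `Tr(S(z,y)·x) = Tr(z·S^t(x,y))`, is again a presemifield multiplication, and
`brk(S^t) = brk(S)`. -/
theorem stmt11 (q n : ℕ) (hq : IsPrimePow q) (hn : 1 ≤ n)
    (F K : Type) [Field F] [Field K] [Algebra F K] [Fintype F] [Fintype K]
    (hcF : Fintype.card F = q) (hcK : Fintype.card K = q ^ n)
    (S : K →ₗ[F] K →ₗ[F] K)
    (hpre : ∀ x y : K, S x y = 0 → x = 0 ∨ y = 0)
    (St : K →ₗ[F] K →ₗ[F] K)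
    (hSt : ∀ x y z : K,
      Algebra.trace F K (S z y * x) = Algebra.trace F K (z * St x y)) :
    (∀ x y : K, St x y = 0 → x = 0 ∨ y = 0) ∧
    sInf (brkSet F K (fun x y => St x y)) = sInf (brkSet F K (fun x y => S x y)) :=
  stmt11_general F K S hpre St hSt
end
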